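/- Let Λ > 0, γ > 0, ξ > 0, and 0 < η ≤ min(1/γ, 1/ξ). Let μ : ℝ → ℝ satisfy |μ(λ) − μ(λ')| ≤ γ·|λ − λ'| for all λ, λ' ∈ [0, Λ], and μ(λ) − μ(λ') ≤ −ξ·(λ − λ') for all λ ≥ λ' in [0, Λ]. Define T(λ) = max(min(λ + η·μ(λ), Λ), 0). Suppose λ♯ ∈ [0, Λ] satisfies μ(λ♯) = 0. Then for every λ ∈ [0, Λ], |T(λ) − λ♯| ≤ (1 − η·ξ)·|λ − λ♯|. -/

import Mathlib

/-! The step `x ↦ x + η μ x` is a `(1 - ηξ)`-contraction on `[0, Λ]`: for `b ≤ a`, strong decrease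
moves the images at least `ηξ (a - b)` closer together, and the Lipschitz bound with `ηγ ≤ 1` keeps
them in the same order, so their distance is at most `(1 - ηξ)(a - b)`. Clipping to `[0, Λ]` is
`1`-Lipschitz, and `λ♯` is fixed both by the step (as `μ λ♯ = 0`) and by the clipping. -/

lemma abs_max_min_sub_max_min_le {α : Type*} [AddCommGroup α] [LinearOrder α] [IsOrderedAddMonoid α]
    (a b c d : α) : |max (min a c) d - max (min b c) d| ≤ |a - b| :=
  (abs_max_sub_max_le_abs _ _ _).trans <| by
    simpa only [sub_self, abs_zero, max_eq_left (abs_nonneg (a - b))] using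
      abs_min_sub_min_le_max a c b c

lemma abs_add_mul_le_of_le_neg_mul {d Δ η γ ξ : ℝ} (hd : 0 ≤ d) (hη : 0 ≤ η)
    (hηγ : η * γ ≤ 1) (hlip : |Δ| ≤ γ * d) (hdec : Δ ≤ -ξ * d) :
    |d + η * Δ| ≤ (1 - η * ξ) * d := by
  have hno_overshoot : 0 ≤ d + η * Δ := by
    have : η * (γ * d) ≤ d := by
      rw [← mul_assoc]; exact mul_le_of_le_one_left hd hηγ
    linarith [mul_le_mul_of_nonneg_left (neg_le_of_abs_le hlip) hη]
  have hdecrease : η * Δ ≤ -(η * ξ) * d := by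
    linarith [mul_le_mul_of_nonneg_left hdec hη]
  rw [abs_of_nonneg hno_overshoot]
  linarith

section Step

variable {s : Set ℝ} {μ : ℝ → ℝ} {γ ξ η : ℝ}

lemma abs_add_mul_sub_add_mul_le_of_le
    (hlip : ∀ a ∈ s, ∀ b ∈ s, |μ a - μ b| ≤ γ * |a - b|)
    (hsm : ∀ a ∈ s, ∀ b ∈ s, b ≤ a → μ a - μ b ≤ -ξ * (a - b))
    (hη : 0 ≤ η) (hηγ : η * γ ≤ 1)
    {a b : ℝ} (ha : a ∈ s) (hb : b ∈ s) (hba : b ≤ a) :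
    |a + η * μ a - (b + η * μ b)| ≤ (1 - η * ξ) * |a - b| := by
  have hd : 0 ≤ a - b := sub_nonneg.mpr hba
  have hlip' := hlip a ha b hb
  rw [abs_of_nonneg hd] at hlip' ⊢
  rw [show a + η * μ a - (b + η * μ b) = (a - b) + η * (μ a - μ b) by ring]
  exact abs_add_mul_le_of_le_neg_mul hd hη hηγ hlip' (hsm a ha b hb hba)

lemma abs_add_mul_sub_add_mul_le
    (hlip : ∀ a ∈ s, ∀ b ∈ s, |μ a - μ b| ≤ γ * |a - b|)
    (hsm : ∀ a ∈ s, ∀ b ∈ s, b ≤ a → μ a - μ b ≤ -ξ * (a - b))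
    (hη : 0 ≤ η) (hηγ : η * γ ≤ 1)
    {a b : ℝ} (ha : a ∈ s) (hb : b ∈ s) :
    |a + η * μ a - (b + η * μ b)| ≤ (1 - η * ξ) * |a - b| := by
  rcases le_total b a with hba | hab
  · exact abs_add_mul_sub_add_mul_le_of_le hlip hsm hη hηγ ha hb hba
  · rw [abs_sub_comm, abs_sub_comm a]
    exact abs_add_mul_sub_add_mul_le_of_le hlip hsm hη hηγ hb ha hab

end Step

theorem dual_update_contraction_general (Λ γ ξ η : ℝ) (hγ : 0 < γ)
    (hη : 0 < η) (hηmin : η ≤ min (1 / γ) (1 / ξ))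
    (μ : ℝ → ℝ)
    (hlip : ∀ a ∈ Set.Icc (0:ℝ) Λ, ∀ b ∈ Set.Icc (0:ℝ) Λ, |μ a - μ b| ≤ γ * |a - b|)
    (hsm : ∀ a ∈ Set.Icc (0:ℝ) Λ, ∀ b ∈ Set.Icc (0:ℝ) Λ, b ≤ a →
      μ a - μ b ≤ -ξ * (a - b))
    (T : ℝ → ℝ) (hT : ∀ x, T x = max (min (x + η * μ x) Λ) 0)
    (lamsharp : ℝ) (hsharp : lamsharp ∈ Set.Icc 0 Λ) (hzero : μ lamsharp = 0)
    (lam : ℝ) (hlam : lam ∈ Set.Icc 0 Λ) :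
    |T lam - lamsharp| ≤ (1 - η * ξ) * |lam - lamsharp| := by
  have hstep_fixed : lamsharp + η * μ lamsharp = lamsharp := by simp [hzero]
  have hclip_fixed : max (min lamsharp Λ) 0 = lamsharp := by
    rw [min_eq_left hsharp.2, max_eq_left hsharp.1]
  calc |T lam - lamsharp|
      = |max (min (lam + η * μ lam) Λ) 0 - max (min (lamsharp + η * μ lamsharp) Λ) 0| := by
        rw [hT, hstep_fixed, hclip_fixed]
    _ ≤ |lam + η * μ lam - (lamsharp + η * μ lamsharp)| := abs_max_min_sub_max_min_le _ _ _ _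
    _ ≤ (1 - η * ξ) * |lam - lamsharp| :=
        abs_add_mul_sub_add_mul_le hlip hsm hη.le
          (mul_le_of_le_div₀ zero_le_one hγ.le (hηmin.trans (min_le_left _ _))) hlam hsharp

/-- One-step contraction of the dual update: with `μ` `γ`-Lipschitz and
`ξ`-strongly decreasing on `[0, Λ]`, step size `0 < η ≤ min(1/γ, 1/ξ)`, and
`λ♯ ∈ [0, Λ]` with `μ(λ♯) = 0`, the projected update `T(λ) = clip(λ + η·μ(λ), 0, Λ)`
contracts toward `λ♯` with factor `1 - η·ξ`. -/
theorem dual_update_contraction (Λ γ ξ η : ℝ) (hΛ : 0 < Λ) (hγ : 0 < γ) (hξ : 0 < ξ)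
    (hη : 0 < η) (hηmin : η ≤ min (1 / γ) (1 / ξ))
    (μ : ℝ → ℝ)
    (hlip : ∀ a ∈ Set.Icc (0:ℝ) Λ, ∀ b ∈ Set.Icc (0:ℝ) Λ, |μ a - μ b| ≤ γ * |a - b|)
    (hsm : ∀ a ∈ Set.Icc (0:ℝ) Λ, ∀ b ∈ Set.Icc (0:ℝ) Λ, b ≤ a →
      μ a - μ b ≤ -ξ * (a - b))
    (T : ℝ → ℝ) (hT : ∀ x, T x = max (min (x + η * μ x) Λ) 0)
    (lamsharp : ℝ) (hsharp : lamsharp ∈ Set.Icc 0 Λ) (hzero : μ lamsharp = 0)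
    (lam : ℝ) (hlam : lam ∈ Set.Icc 0 Λ) :
    |T lam - lamsharp| ≤ (1 - η * ξ) * |lam - lamsharp| :=
  dual_update_contraction_general Λ γ ξ η hγ hη hηmin μ hlip hsm T hT lamsharp hsharp hzero lam hlam
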